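/- arXiv:hep-th/9212154 — 2 statements merged into one kernel-verified Lean document; each statement's English description precedes it below -/
import Mathlib

section
/- Let R be a finite-dimensional semisimple associative ℂ-algebra with basis {φ_i}, structure constants C_{ij}^k, nondegenerate metric g_{ij} = C_{ik}^l C_{jl}^k with inverse g^{ij}. Define η_i^j = C_{ik}^l C^{jk}_l (indices raised with g^{ij}). Then the linear map η : R → R given by η(φ_i) = η_i^j φ_j satisfies η ∘ η = η. -/
/-! Put `d j = ∑ i, ginv i j • b i`. Then `τ (b i * d j) = δ i j` for the trace form
`τ a = tr (L_a)`, and `η x = ∑ j, d j * x * b j`. Expanding `a * d j` along `d` and `b j * a`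
along `b` (both expansions have coefficients given by `τ`, and `τ` is cyclic) shows that `η x`
is central. Computing `tr (L_c)` in the basis `b` gives `τ (c * ∑ j, b j * d j) = τ c`, so
`∑ j, b j * d j = 1` by nondegeneracy; the same sum with the factors swapped is also `1`.
Hence `η (η x) = η x * ∑ j, d j * b j = η x`. -/

open Finset

section DualBases

variable {K A ι : Type*} [CommRing K] [Ring A] [Algebra K A] [Fintype ι] [DecidableEq ι]

def IsTraceDual (τ : A →ₗ[K] K) (b d : ι → A) : Prop :=
  ∀ i j, τ (b i * d j) = if i = j then 1 else 0

def dualSandwich (d b : ι → A) (x : A) : A :=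
  ∑ j, d j * x * b j

variable {τ : A →ₗ[K] K} {b : Module.Basis ι K A} {d : ι → A}

theorem IsTraceDual.repr_eq (hd : IsTraceDual τ b d) (y : A) (j : ι) :
    b.repr y j = τ (y * d j) := by
  conv_rhs => rw [← b.sum_repr y]
  simp only [sum_mul, smul_mul_assoc, map_sum, map_smul, hd _ _, smul_eq_mul, mul_ite, mul_one,
    mul_zero, sum_ite_eq', mem_univ, if_true]

theorem IsTraceDual.sum_smul_eq (hd : IsTraceDual τ b d) (y : A) :
    ∑ j, τ (y * d j) • b j = y := by
  simpa only [hd.repr_eq] using b.sum_repr y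

variable (hτ : ∀ x y, τ (x * y) = τ (y * x))
include hτ

theorem IsTraceDual.eq_of_forall_trace_mul_eq (hd : IsTraceDual τ b d) {y z : A}
    (h : ∀ c, τ (c * y) = τ (c * z)) : y = z := by
  rw [← hd.sum_smul_eq y, ← hd.sum_smul_eq z]
  simp only [hτ _ (d _), h]

theorem IsTraceDual.sum_smul_dual_eq (hd : IsTraceDual τ b d) (y : A) :
    ∑ k, τ (y * b k) • d k = y := by
  refine hd.eq_of_forall_trace_mul_eq hτ fun c => ?_
  conv_rhs => rw [← hd.sum_smul_eq c]
  simp only [mul_sum, sum_mul, mul_smul_comm, smul_mul_assoc, map_sum, map_smul, smul_eq_mul,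
    hτ y, mul_comm]

theorem IsTraceDual.sum_dual_mul_eq (hd : IsTraceDual τ b d) :
    ∑ j, d j * b j = ∑ j, b j * d j := by
  calc ∑ j, d j * b j = ∑ j, (∑ k, τ (d j * d k) • b k) * b j := by
        simp only [hd.sum_smul_eq]
    _ = ∑ k, b k * ∑ j, τ (d k * d j) • b j := by
        simp only [sum_mul, mul_sum, smul_mul_assoc, mul_smul_comm]
        rw [sum_comm]
        simp only [hτ (d _) (d _)]
    _ = ∑ j, b j * d j := by simp only [hd.sum_smul_eq]

theorem IsTraceDual.commute_dualSandwich (hd : IsTraceDual τ b d) (a x : A) :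
    Commute a (dualSandwich d b x) := by
  unfold dualSandwich
  calc a * ∑ j, d j * x * b j = ∑ j, (∑ k, τ (a * d j * b k) • d k) * x * b j := by
        simp only [hd.sum_smul_dual_eq hτ]
        simp only [mul_sum, mul_assoc]
    _ = ∑ k, d k * x * ∑ j, τ (b k * a * d j) • b j := by
        simp only [sum_mul, mul_sum, smul_mul_assoc, mul_smul_comm]
        rw [sum_comm]
        refine sum_congr rfl fun k _ => sum_congr rfl fun j _ => ?_
        rw [hτ, ← mul_assoc]
    _ = (∑ j, d j * x * b j) * a := by
        simp only [hd.sum_smul_eq]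
        simp only [sum_mul, mul_assoc]

theorem IsTraceDual.dualSandwich_dualSandwich (hd : IsTraceDual τ b d) (hone : ∑ j, b j * d j = 1)
    (x : A) : dualSandwich d b (dualSandwich d b x) = dualSandwich d b x := by
  calc dualSandwich d b (dualSandwich d b x)
      = ∑ j, dualSandwich d b x * d j * b j := by
        rw [dualSandwich]
        refine sum_congr rfl fun j _ => ?_
        rw [(hd.commute_dualSandwich hτ (d j) x).eq]
    _ = dualSandwich d b x * ∑ j, d j * b j := by simp only [mul_sum, mul_assoc]
    _ = dualSandwich d b x := by rw [hd.sum_dual_mul_eq hτ, hone, mul_one]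

end DualBases

theorem isTraceDual_of_mul_eq_one {K A ι : Type*} [CommRing K] [Ring A] [Algebra K A]
    [Fintype ι] [DecidableEq ι] {τ : A →ₗ[K] K} {b : ι → A} {g ginv : Matrix ι ι K}
    (hg : ∀ i j, g i j = τ (b i * b j)) (hinv : g * ginv = 1) :
    IsTraceDual τ b (fun j => ∑ i, ginv i j • b i) := by
  intro k j
  simp only [mul_sum, mul_smul_comm, map_sum, map_smul, smul_eq_mul, ← hg, mul_comm (ginv _ _)]
  rw [← Matrix.mul_apply, hinv, Matrix.one_apply]

section MulLeftTrace

variable (K A : Type*) [CommRing K] [Ring A] [Algebra K A]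

noncomputable def mulLeftTrace : A →ₗ[K] K :=
  LinearMap.trace K A ∘ₗ LinearMap.mul K A

variable {K A}

theorem mulLeftTrace_apply (a : A) :
    mulLeftTrace K A a = LinearMap.trace K A (LinearMap.mulLeft K a) := rfl

theorem mulLeftTrace_mul_comm (x y : A) : mulLeftTrace K A (x * y) = mulLeftTrace K A (y * x) := by
  simp only [mulLeftTrace_apply, LinearMap.mulLeft_mul, ← Module.End.mul_eq_comp]
  exact LinearMap.trace_mul_comm _ _ _

theorem IsTraceDual.sum_mul_dual_eq_one {ι : Type*} [Fintype ι] [DecidableEq ι]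
    {b : Module.Basis ι K A} {d : ι → A} (hd : IsTraceDual (mulLeftTrace K A) b d) :
    ∑ j, b j * d j = 1 := by
  refine hd.eq_of_forall_trace_mul_eq mulLeftTrace_mul_comm fun c => ?_
  calc mulLeftTrace K A (c * ∑ j, b j * d j)
      = ∑ j, b.repr (c * b j) j := by
        simp only [hd.repr_eq, mul_sum, map_sum, mul_assoc]
    _ = mulLeftTrace K A (c * 1) := by
        rw [mul_one, mulLeftTrace_apply, LinearMap.trace_eq_matrix_trace K b, Matrix.trace]
        simp only [Matrix.diag, LinearMap.toMatrix_apply, LinearMap.mulLeft_apply]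

end MulLeftTrace

theorem stmt3_general {A ι : Type*} [Ring A] [Algebra ℂ A]
    [Fintype ι] [DecidableEq ι]
    (b : Module.Basis ι ℂ A) (g ginv : Matrix ι ι ℂ)
    (hg : ∀ i j, g i j =
      LinearMap.trace ℂ A (LinearMap.mulLeft ℂ (b i) ∘ₗ LinearMap.mulLeft ℂ (b j)))
    (hinv : g * ginv = 1)
    (η : A → A) (hη : ∀ x, η x = ∑ i, ∑ j, ginv i j • (b i * x * b j)) :
    ∀ x, η (η x) = η x := by
  have hd : IsTraceDual (mulLeftTrace ℂ A) b (fun j => ∑ i, ginv i j • b i) :=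
    isTraceDual_of_mul_eq_one (fun i j => by rw [hg, mulLeftTrace_apply, LinearMap.mulLeft_mul])
      hinv
  have hη_eq : η = dualSandwich (fun j => ∑ i, ginv i j • b i) b := by
    funext x
    rw [hη, dualSandwich, sum_comm]
    simp only [sum_mul, smul_mul_assoc]
  rw [hη_eq]
  exact hd.dualSandwich_dualSandwich mulLeftTrace_mul_comm hd.sum_mul_dual_eq_one

/-- For a finite-dimensional semisimple associative ℂ-algebra with basis
`b`, metric `g i j = tr(L_{b i} ∘ L_{b j})` with inverse `ginv`, the map
`η x = ∑ i j, ginv i j • (b i * x * b j)` (the two-holed-sphere projector, whose matrix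
in the basis is `η_i^j = C_{ik}^l C^{jk}_l`) is idempotent: η ∘ η = η. -/
theorem stmt3 {A ι : Type*} [Ring A] [Algebra ℂ A] [FiniteDimensional ℂ A]
    [IsSemisimpleRing A] [Fintype ι] [DecidableEq ι]
    (b : Module.Basis ι ℂ A) (g ginv : Matrix ι ι ℂ)
    (hg : ∀ i j, g i j =
      LinearMap.trace ℂ A (LinearMap.mulLeft ℂ (b i) ∘ₗ LinearMap.mulLeft ℂ (b j)))
    (hinv : g * ginv = 1) (hinv' : ginv * g = 1)
    (η : A → A) (hη : ∀ x, η x = ∑ i, ∑ j, ginv i j • (b i * x * b j)) :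
    ∀ x, η (η x) = η x :=
  stmt3_general b g ginv hg hinv η hη
end

section
/- Let R be a finite-dimensional semisimple associative ℂ-algebra with basis {φ_i}, structure constants C_{ijk} = tr(L_{φ_i} L_{φ_j} L_{φ_k}), and central projector η as above. Then the projected three-point function N_{ijk} = η_i^{i'} η_j^{j'} η_k^{k'} C_{i'j'k'} is totally symmetric in i, j, k (even though C_{ijk} is in general only cyclically symmetric). -/
/-!
Write `τ` for the functional `x ↦ tr L_x`, so that `g_pq = τ(b_p b_q)` and
`C_ijk = τ(b_i b_j b_k)`, and let `L`, `R` be the matrices of left and right multiplication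
by `a` in the basis `b`. Associativity `τ(b_p (a b_q)) = τ((b_p a) b_q)` reads `g L = Rᵀ g`,
hence `L g⁻¹ = g⁻¹ Rᵀ`, and this is exactly `a η(x) = η(x) a`: the projector lands in the
centre. Expanding trilinearly, `N_ijk = τ(η(b_i) η(b_j) η(b_k))`, and the three central
factors commute.
-/

open Matrix

section

variable {K A ι : Type*} [CommRing K] [Ring A] [Algebra K A] [Fintype ι]

section Sandwich

variable (b : Module.Basis ι K A)

noncomputable def sandwich (M : Matrix ι ι K) (x : A) : A :=
  ∑ p, ∑ q, M p q • (b p * x * b q)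

variable [DecidableEq ι]

theorem mul_sandwich (a : A) (M : Matrix ι ι K) (x : A) :
    a * sandwich b M x = sandwich b (LinearMap.toMatrix b b (LinearMap.mulLeft K a) * M) x := by
  have hab : ∀ p, a * b p = ∑ m, LinearMap.toMatrix b b (LinearMap.mulLeft K a) m p • b m :=
    fun p => by
      simpa only [LinearMap.toMatrix_apply, LinearMap.mulLeft_apply] using (b.sum_repr _).symm
  calc a * sandwich b M x
      = ∑ p, ∑ q, ∑ m, (LinearMap.toMatrix b b (LinearMap.mulLeft K a) m p * M p q) •
          (b m * x * b q) := by
        simp only [sandwich, Finset.mul_sum, mul_smul_comm, ← mul_assoc, hab, Finset.sum_mul,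
          smul_mul_assoc, Finset.smul_sum, smul_smul, mul_comm (M _ _)]
    _ = sandwich b (LinearMap.toMatrix b b (LinearMap.mulLeft K a) * M) x := by
        simp only [sandwich, Matrix.mul_apply, Finset.sum_smul]
        rw [Finset.sum_comm]
        conv_rhs => rw [Finset.sum_comm]
        exact Finset.sum_congr rfl fun _ _ => Finset.sum_comm

theorem sandwich_mul (a : A) (M : Matrix ι ι K) (x : A) :
    sandwich b M x * a =
      sandwich b (M * (LinearMap.toMatrix b b (LinearMap.mulRight K a))ᵀ) x := by
  have hba : ∀ q, b q * a = ∑ m, LinearMap.toMatrix b b (LinearMap.mulRight K a) m q • b m :=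
    fun q => by
      simpa only [LinearMap.toMatrix_apply, LinearMap.mulRight_apply] using (b.sum_repr _).symm
  calc sandwich b M x * a
      = ∑ p, ∑ q, ∑ m, (M p q * LinearMap.toMatrix b b (LinearMap.mulRight K a) m q) •
          (b p * x * b m) := by
        simp only [sandwich, Finset.sum_mul, smul_mul_assoc, mul_assoc, hba, Finset.mul_sum,
          mul_smul_comm, Finset.smul_sum, smul_smul]
    _ = sandwich b (M * (LinearMap.toMatrix b b (LinearMap.mulRight K a))ᵀ) x := by
        simp only [sandwich, Matrix.mul_apply, Matrix.transpose_apply, Finset.sum_smul]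
        exact Finset.sum_congr rfl fun _ _ => Finset.sum_comm

end Sandwich

section Gram

variable (τ : A →ₗ[K] K) (b : Module.Basis ι K A) {g : Matrix ι ι K}

theorem apply_mul_eq_sum_repr_left (y z : A) : τ (y * z) = ∑ m, b.repr y m * τ (b m * z) := by
  conv_lhs => rw [← b.sum_repr y]
  simp only [Finset.sum_mul, map_sum, smul_mul_assoc, map_smul, smul_eq_mul]

theorem apply_mul_eq_sum_repr_right (y z : A) : τ (z * y) = ∑ m, τ (z * b m) * b.repr y m := by
  conv_lhs => rw [← b.sum_repr y]
  simp only [Finset.mul_sum, map_sum, mul_smul_comm, map_smul, smul_eq_mul, mul_comm]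

variable [DecidableEq ι]

theorem gram_mul_toMatrix_mulLeft (hg : ∀ p q, g p q = τ (b p * b q)) (a : A) :
    g * LinearMap.toMatrix b b (LinearMap.mulLeft K a) =
      (LinearMap.toMatrix b b (LinearMap.mulRight K a))ᵀ * g := by
  ext p q
  calc (g * LinearMap.toMatrix b b (LinearMap.mulLeft K a)) p q
      = τ (b p * (a * b q)) := by
        rw [apply_mul_eq_sum_repr_right τ b]
        simp only [Matrix.mul_apply, hg, LinearMap.toMatrix_apply, LinearMap.mulLeft_apply]
    _ = τ (b p * a * b q) := by rw [mul_assoc]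
    _ = ((LinearMap.toMatrix b b (LinearMap.mulRight K a))ᵀ * g) p q := by
        rw [apply_mul_eq_sum_repr_left τ b]
        simp only [Matrix.mul_apply, hg, Matrix.transpose_apply, LinearMap.toMatrix_apply,
          LinearMap.mulRight_apply]

theorem commute_sandwich (hg : ∀ p q, g p q = τ (b p * b q)) {ginv : Matrix ι ι K}
    (hinv : g * ginv = 1) (a x : A) : Commute a (sandwich b ginv x) := by
  set L := LinearMap.toMatrix b b (LinearMap.mulLeft K a)
  set R := LinearMap.toMatrix b b (LinearMap.mulRight K a)
  have hinv' : ginv * g = 1 := mul_eq_one_comm.mp hinv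
  have hLR : L * ginv = ginv * Rᵀ :=
    calc L * ginv = ginv * (g * L) * ginv := by rw [← mul_assoc, hinv', one_mul]
      _ = ginv * Rᵀ := by
        rw [gram_mul_toMatrix_mulLeft τ b hg, mul_assoc, mul_assoc, hinv, mul_one]
  rw [commute_iff_eq, mul_sandwich, sandwich_mul, hLR]

end Gram

theorem apply_sum_mul_sum_mul_sum (τ : A →ₗ[K] K) (v : ι → A) (x y z : ι → K) :
    τ ((∑ i, x i • v i) * (∑ j, y j • v j) * (∑ k, z k • v k)) =
      ∑ i, ∑ j, ∑ k, x i * y j * z k * τ (v i * v j * v k) := by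
  simp only [Finset.sum_mul, Finset.mul_sum, smul_mul_assoc, mul_smul_comm, map_sum, map_smul,
    smul_eq_mul]
  rw [Finset.sum_comm_cycle]
  refine Finset.sum_congr rfl fun i _ => ?_
  rw [Finset.sum_comm]
  exact Finset.sum_congr rfl fun j _ => Finset.sum_congr rfl fun k _ => by ring

end

theorem stmt6_general {A ι : Type*} [Ring A] [Algebra ℂ A] [Fintype ι] [DecidableEq ι]
    (b : Module.Basis ι ℂ A) (g ginv : Matrix ι ι ℂ)
    (hg : ∀ i j, g i j =
      LinearMap.trace ℂ A (LinearMap.mulLeft ℂ (b i) ∘ₗ LinearMap.mulLeft ℂ (b j)))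
    (hinv : g * ginv = 1)
    (C : ι → ι → ι → ℂ)
    (hC : ∀ i j k, C i j k = LinearMap.trace ℂ A
      (LinearMap.mulLeft ℂ (b i) ∘ₗ LinearMap.mulLeft ℂ (b j) ∘ₗ LinearMap.mulLeft ℂ (b k)))
    (ηm : Matrix ι ι ℂ)
    (hηm : ∀ i j, ηm i j = b.repr (∑ p, ∑ q, ginv p q • (b p * b i * b q)) j)
    (N : ι → ι → ι → ℂ)
    (hN : ∀ i j k, N i j k = ∑ i', ∑ j', ∑ k', ηm i i' * ηm j j' * ηm k k' * C i' j' k') :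
    ∀ i j k, N i j k = N j i k ∧ N i j k = N i k j := by
  set τ : A →ₗ[ℂ] ℂ := LinearMap.trace ℂ A ∘ₗ LinearMap.mul ℂ A
  have hgτ : ∀ i j, g i j = τ (b i * b j) := fun i j => by
    rw [hg, ← LinearMap.mulLeft_mul]; rfl
  have hCτ : ∀ i j k, C i j k = τ (b i * b j * b k) := fun i j k => by
    rw [hC, ← LinearMap.mulLeft_mul, ← LinearMap.mulLeft_mul, mul_assoc]; rfl
  have hη : ∀ i, sandwich b ginv (b i) = ∑ j, ηm i j • b j := fun i => by
    simp only [hηm]; exact (b.sum_repr _).symm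
  have hNτ : ∀ i j k, N i j k =
      τ (sandwich b ginv (b i) * sandwich b ginv (b j) * sandwich b ginv (b k)) := by
    intro i j k
    simp only [hN, hη, apply_sum_mul_sum_mul_sum, hCτ]
  have hcomm : ∀ i j, Commute (sandwich b ginv (b i)) (sandwich b ginv (b j)) :=
    fun i j => commute_sandwich τ b hgτ hinv _ _
  intro i j k
  exact ⟨by rw [hNτ, hNτ, (hcomm i j).eq],
    by rw [hNτ, hNτ, mul_assoc, mul_assoc, (hcomm j k).eq]⟩

/-- With `C i j k = tr(L_{b i} L_{b j} L_{b k})` and `ηm` the matrix of the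
central projector `η x = ∑ ginv i j • (b i * x * b j)` in the basis `b`, the projected
three-point function `N i j k = ∑ η_i^{i'} η_j^{j'} η_k^{k'} C_{i'j'k'}` is totally
symmetric in `i, j, k`. -/
theorem stmt6 {A ι : Type*} [Ring A] [Algebra ℂ A] [FiniteDimensional ℂ A]
    [IsSemisimpleRing A] [Fintype ι] [DecidableEq ι]
    (b : Module.Basis ι ℂ A) (g ginv : Matrix ι ι ℂ)
    (hg : ∀ i j, g i j =
      LinearMap.trace ℂ A (LinearMap.mulLeft ℂ (b i) ∘ₗ LinearMap.mulLeft ℂ (b j)))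
    (hinv : g * ginv = 1) (hinv' : ginv * g = 1)
    (C : ι → ι → ι → ℂ)
    (hC : ∀ i j k, C i j k = LinearMap.trace ℂ A
      (LinearMap.mulLeft ℂ (b i) ∘ₗ LinearMap.mulLeft ℂ (b j) ∘ₗ LinearMap.mulLeft ℂ (b k)))
    (ηm : Matrix ι ι ℂ)
    (hηm : ∀ i j, ηm i j = b.repr (∑ p, ∑ q, ginv p q • (b p * b i * b q)) j)
    (N : ι → ι → ι → ℂ)
    (hN : ∀ i j k, N i j k = ∑ i', ∑ j', ∑ k', ηm i i' * ηm j j' * ηm k k' * C i' j' k') :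
    ∀ i j k, N i j k = N j i k ∧ N i j k = N i k j :=
  stmt6_general b g ginv hg hinv C hC ηm hηm N hN
end
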